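/- The map sending a pointed Lyndon forest F on [n] to the saturated chain c(F) is a bijection between FLyn_n^• and the set of ascent-free saturated chains of Π_n^• starting at 0̂, where ascent-free is with respect to the labeling λ_• with label poset Λ_n^•. -/

import Mathlib

open Finset

open scoped BigOperators Classical

/-! ## Generic machinery for edge labelings of posets presented by cover relations -/

section Chains

variable {α : Type*} {L : Type*}

/-- The word of labels read along a list of poset elements. -/
def wordOf (lab : α → α → L) : List α → List L
  | x :: y :: rest => lab x y :: wordOf lab (y :: rest)
  | _ => []

/-- `c` is a saturated chain from `x` to `y` with respect to the cover relation `cov`;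
in a graded poset these are exactly the maximal chains of the interval `[x, y]`. -/
def IsSatChain (cov : α → α → Prop) (x y : α) (c : List α) : Prop :=
  c.Chain' cov ∧ c.head? = some x ∧ c.getLast? = some y

/-- A word of labels is increasing if consecutive labels strictly increase. -/
def IncWord (lt : L → L → Prop) (w : List L) : Prop := w.Chain' lt

/-- A word of labels is ascent-free if no consecutive pair of labels strictly increases. -/
def AscFree (lt : L → L → Prop) (w : List L) : Prop := w.Chain' fun a b => ¬ lt a b

/-- The partial order generated by a cover relation. -/
def leOf (cov : α → α → Prop) : α → α → Prop := Relation.ReflTransGen cov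

/-- The strict order generated by a cover relation. -/
def ltOf (cov : α → α → Prop) (a b : α) : Prop := leOf cov a b ∧ a ≠ b

/-- An ER-labeling: every closed interval has a unique increasing maximal chain. -/
def IsERLabeling (cov : α → α → Prop) (lab : α → α → L) (lt : L → L → Prop) : Prop :=
  ∀ x y, leOf cov x y → ∃! c, IsSatChain cov x y c ∧ IncWord lt (wordOf lab c)

/-- The rank two switching property: in every rank-two interval whose increasing chain
has word of labels `ab`, there is a unique chain with word of labels `ba`. -/
def RankTwoSwitch (cov : α → α → Prop) (lab : α → α → L) (lt : L → L → Prop) : Prop :=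
  ∀ x y c a b, IsSatChain cov x y c → IncWord lt (wordOf lab c) → wordOf lab c = [a, b] →
    ∃! c', IsSatChain cov x y c' ∧ wordOf lab c' = [b, a]

/-- In every interval, distinct ascent-free maximal chains have distinct label words. -/
def AscFreeInj (cov : α → α → Prop) (lab : α → α → L) (lt : L → L → Prop) : Prop :=
  ∀ x y c c', IsSatChain cov x y c → IsSatChain cov x y c' →
    AscFree lt (wordOf lab c) → AscFree lt (wordOf lab c') →
    wordOf lab c = wordOf lab c' → c = c'

/-- An EW-labeling. -/
def IsEWLabeling (cov : α → α → Prop) (lab : α → α → L) (lt : L → L → Prop) : Prop :=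
  IsERLabeling cov lab lt ∧ RankTwoSwitch cov lab lt ∧ AscFreeInj cov lab lt

/-- An EL-labeling: every closed interval has a unique increasing maximal chain,
which lexicographically precedes every other maximal chain of the interval. -/
def IsELLabeling (cov : α → α → Prop) (lab : α → α → L) (lt : L → L → Prop) : Prop :=
  ∀ x y, leOf cov x y →
    ∃ c, (IsSatChain cov x y c ∧ IncWord lt (wordOf lab c)) ∧
      ∀ c', IsSatChain cov x y c' → c' ≠ c →
        ¬ IncWord lt (wordOf lab c') ∧ List.Lex lt (wordOf lab c) (wordOf lab c')

end Chains

/-! ## Möbius functions and Whitney numbers -/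

section Whitney

variable {α : Type*} {β : Type*}

/-- Auxiliary Möbius function computed with fuel; for an element of rank `k` of a
graded poset, fuel `k` computes the one-variable Möbius function `μ(0̂, ·)`. -/
noncomputable def muAux (ltr : α → α → Prop) (bot : α) : ℕ → α → ℤ
  | 0, x => if x = bot then 1 else 0
  | k + 1, x => if x = bot then 1 else - ∑ᶠ (y : α) (_ : ltr y x), muAux ltr bot k y

/-- The one-variable Möbius function `μ(0̂, x)` of a graded poset presented by its
cover relation `cov`, minimum `bot` and rank function `rk`. -/
noncomputable def muBot (cov : α → α → Prop) (bot : α) (rk : α → ℕ) (x : α) : ℤ :=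
  muAux (ltOf cov) bot (rk x) x

/-- The `k`-th Whitney number of the first kind. -/
noncomputable def whitney1 (cov : α → α → Prop) (bot : α) (rk : α → ℕ) (k : ℕ) : ℤ :=
  ∑ᶠ (x : α) (_ : rk x = k), muBot cov bot rk x

/-- The `k`-th Whitney number of the second kind. -/
noncomputable def whitney2 (rk : α → ℕ) (k : ℕ) : ℕ :=
  Nat.card {x : α // rk x = k}

/-- Two graded posets are Whitney duals if their Whitney numbers of the first and second
kind are swapped (up to sign). -/
def IsWhitneyDual (covP : α → α → Prop) (botP : α) (rkP : α → ℕ)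
    (covQ : β → β → Prop) (botQ : β) (rkQ : β → ℕ) : Prop :=
  ∀ k, (whitney1 covP botP rkP k).natAbs = whitney2 rkQ k ∧
       (whitney1 covQ botQ rkQ k).natAbs = whitney2 rkP k

/-- Two graded posets are Whitney twins if they have the same Whitney numbers of the first
and of the second kind. -/
def IsWhitneyTwin (covP : α → α → Prop) (botP : α) (rkP : α → ℕ)
    (covQ : β → β → Prop) (botQ : β) (rkQ : β → ℕ) : Prop :=
  ∀ k, whitney1 covP botP rkP k = whitney1 covQ botQ rkQ k ∧ whitney2 rkP k = whitney2 rkQ k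

/-- `(cov, bot, rk)` presents a graded poset with minimum `bot`. -/
def IsGradedPoset (cov : α → α → Prop) (bot : α) (rk : α → ℕ) : Prop :=
  (∀ x, leOf cov bot x) ∧ rk bot = 0 ∧ ∀ x y, cov x y → rk y = rk x + 1

/-- A graded poset has a Whitney dual. -/
def HasWhitneyDual {γ : Type} (cov : γ → γ → Prop) (bot : γ) (rk : γ → ℕ) : Prop :=
  ∃ (β : Type) (_ : Finite β) (covQ : β → β → Prop) (botQ : β) (rkQ : β → ℕ),
    IsGradedPoset covQ botQ rkQ ∧ IsWhitneyDual cov bot rk covQ botQ rkQ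

/-- Isomorphism of the posets generated by two cover relations. -/
def CovPosetIso (covP : α → α → Prop) (covQ : β → β → Prop) : Prop :=
  ∃ e : α ≃ β, ∀ x y, leOf covP x y ↔ leOf covQ (e x) (e y)

end Whitney

/-! ## The label posets `Λₙʷ` and `Λₙ•` (strict order relations)

Labels are triples `(a, b, u)` with `a < b` in `[n]` and `u ∈ {0,1}` (encoded as `Bool`). -/

/-- The strict order of `Λₙʷ = Γ₁ ⊕ ⋯ ⊕ Γ_{n-1}` where `Γ_a` carries the product order
`(a,b)ᵘ ≤ (a,c)ᵛ ↔ b ≤ c ∧ u ≤ v`. -/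
def ltLw (x y : ℕ × ℕ × Bool) : Prop :=
  x.1 < y.1 ∨ (x.1 = y.1 ∧ x.2.1 ≤ y.2.1 ∧ x.2.2 ≤ y.2.2 ∧ x.2 ≠ y.2)

/-- The strict order of `Λₙ• = A₁ ⊕ C₁ ⊕ ⋯ ⊕ A_{n-1} ⊕ C_{n-1}` where `A_a` is the
antichain of the `(a,b)⁰` and `C_a` is the chain of the `(a,b)¹` ordered by `b`. -/
def ltLp (x y : ℕ × ℕ × Bool) : Prop :=
  x.1 < y.1 ∨ (x.1 = y.1 ∧
    ((x.2.2 = false ∧ y.2.2 = true) ∨ (x.2.2 = true ∧ y.2.2 = true ∧ x.2.1 < y.2.1)))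

/-! ## Pointed and weighted partition posets -/

/-- The minimum of a finite set of naturals (`0` for the empty set). -/
def minB (B : Finset ℕ) : ℕ := WithTop.untopD 0 B.min

/-- Pointed partitions of the ground set `A`: partitions of `A` into blocks, each block
carrying a distinguished (pointed) element.  A pointed block is a pair `(B, p)` with `p ∈ B`. -/
abbrev PPart (A : Finset ℕ) : Type :=
  {π : Finset (Finset ℕ × ℕ) //
    (∀ b ∈ π, b.2 ∈ b.1) ∧
    (∀ b ∈ π, ∀ b' ∈ π, b ≠ b' → Disjoint b.1 b'.1) ∧
    π.biUnion Prod.fst = A}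

/-- The cover relation of the pointed partition poset: merge two pointed blocks, the merged
block being pointed at the pointed element of one of the two. -/
def covPP {A : Finset ℕ} (π π' : PPart A) : Prop :=
  ∃ b1 ∈ π.1, ∃ b2 ∈ π.1, minB b1.1 < minB b2.1 ∧
    ∃ p : ℕ, (p = b1.2 ∨ p = b2.2) ∧
      π'.1 = insert (b1.1 ∪ b2.1, p) ((π.1.erase b1).erase b2)

/-- The labeling `λ•` (as a bare label map): the cover `u`-merging blocks `A, B` with
`min A < min B` gets the label `(min A, min B, u)`, where `u = 1` exactly when the merged
block is pointed at the pointed element of `A`. -/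
noncomputable def labPP {A : Finset ℕ} (π π' : PPart A) : ℕ × ℕ × Bool :=
  let olds := π.1 \ π'.1
  let mins := olds.image (fun b => minB b.1)
  (WithTop.untopD 0 mins.min, WithBot.unbotD 0 mins.max,
    if ∃ b ∈ olds, minB b.1 = WithTop.untopD 0 mins.min ∧ ∃ d ∈ π'.1 \ π.1, d.2 = b.2
      then true else false)

/-- The minimum of the pointed partition poset: all blocks are pointed singletons. -/
def botPP (A : Finset ℕ) : PPart A :=
  ⟨A.image fun i => ({i}, i), by
    refine ⟨?_, ?_, ?_⟩
    · intro b hb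
      obtain ⟨i, -, rfl⟩ := Finset.mem_image.1 hb
      exact Finset.mem_singleton_self i
    · intro b hb b' hb' hne
      obtain ⟨i, -, rfl⟩ := Finset.mem_image.1 hb
      obtain ⟨j, -, rfl⟩ := Finset.mem_image.1 hb'
      have hij : i ≠ j := fun h => hne (by rw [h])
      simp [Finset.disjoint_left, hij]
    · ext x
      simp⟩

/-- The rank function of the pointed partition poset. -/
def rkPP {A : Finset ℕ} (π : PPart A) : ℕ := A.card - π.1.card

/-- Weighted partitions of the ground set `A`: partitions of `A` into blocks, each block `B`
carrying a weight `v` with `0 ≤ v ≤ |B| - 1`. -/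
abbrev WPart (A : Finset ℕ) : Type :=
  {π : Finset (Finset ℕ × ℕ) //
    (∀ b ∈ π, b.2 < b.1.card) ∧
    (∀ b ∈ π, ∀ b' ∈ π, b ≠ b' → Disjoint b.1 b'.1) ∧
    π.biUnion Prod.fst = A}

/-- The cover relation of the weighted partition poset: merge blocks `A^v, B^w` into
`(A ∪ B)^(v+w+u)` for some `u ∈ {0,1}`. -/
def covWP {A : Finset ℕ} (π π' : WPart A) : Prop :=
  ∃ b1 ∈ π.1, ∃ b2 ∈ π.1, minB b1.1 < minB b2.1 ∧ ∃ u : Bool,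
    π'.1 = insert (b1.1 ∪ b2.1, b1.2 + b2.2 + (if u then 1 else 0)) ((π.1.erase b1).erase b2)

/-- The labeling `λ_w` (as a bare label map): the cover merging `A^v, B^w` with
`min A < min B` into `(A ∪ B)^(v+w+u)` gets the label `(min A, min B, u)`. -/
noncomputable def labWP {A : Finset ℕ} (π π' : WPart A) : ℕ × ℕ × Bool :=
  let olds := π.1 \ π'.1
  let mins := olds.image (fun b => minB b.1)
  (WithTop.untopD 0 mins.min, WithBot.unbotD 0 mins.max,
    if (π'.1 \ π.1).sum Prod.snd = olds.sum Prod.snd + 1 then true else false)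

/-- The minimum of the weighted partition poset: all blocks singletons of weight `0`. -/
def botWP (A : Finset ℕ) : WPart A :=
  ⟨A.image fun i => ({i}, 0), by
    refine ⟨?_, ?_, ?_⟩
    · intro b hb
      obtain ⟨i, -, rfl⟩ := Finset.mem_image.1 hb
      simp
    · intro b hb b' hb' hne
      obtain ⟨i, -, rfl⟩ := Finset.mem_image.1 hb
      obtain ⟨j, -, rfl⟩ := Finset.mem_image.1 hb'
      have hij : i ≠ j := fun h => hne (by rw [h])
      simp [Finset.disjoint_left, hij]
    · ext x
      simp⟩

/-- The rank function of the weighted partition poset. -/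
def rkWP {A : Finset ℕ} (π : WPart A) : ℕ := A.card - π.1.card
/-! ## Bicolored binary trees and Lyndon forests -/

/-- Planar binary trees with `ℕ`-labeled leaves and `Bool`-colored internal vertices
(`false` = color 0, `true` = color 1). -/
inductive BT : Type
  | leaf : ℕ → BT
  | node : Bool → BT → BT → BT
deriving DecidableEq

namespace BT

/-- The valency: the minimum leaf label of a tree. -/
def nu : BT → ℕ
  | leaf a => a
  | node _ l r => min l.nu r.nu

/-- The set of leaf labels of a tree. -/
def leaves : BT → Finset ℕ
  | leaf a => {a}
  | node _ l r => l.leaves ∪ r.leaves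

/-- The number of internal vertices of a tree. -/
def internals : BT → ℕ
  | leaf _ => 0
  | node _ l r => l.internals + r.internals + 1

/-- A tree is normalized if its leaf labels are distinct and every internal vertex has the
same valency as its left child. -/
def normalized : BT → Prop
  | leaf _ => True
  | node _ l r => l.normalized ∧ r.normalized ∧ Disjoint l.leaves r.leaves ∧ l.nu < r.nu

/-- The pointed Lyndon condition: at every internal vertex `v` with internal left child,
`color (L v) ≥ color v`, and if `color (L v) = color v = 1` then `v` is a Lyndon vertex,
i.e. `ν (R (L v)) > ν (R v)`. -/
def pLyn : BT → Prop
  | leaf _ => True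
  | node c l r => l.pLyn ∧ r.pLyn ∧
      (match l with
       | leaf _ => True
       | node c' _ r' => c ≤ c' ∧ ((c' = c ∧ c = true) → r.nu < r'.nu))

/-- The bicolored Lyndon condition: every internal vertex with internal left child is
Lyndon (`ν (R (L v)) > ν (R v)`) or satisfies `color (L v) > color v`. -/
def wLyn : BT → Prop
  | leaf _ => True
  | node c l r => l.wLyn ∧ r.wLyn ∧
      (match l with
       | leaf _ => True
       | node c' _ r' => r.nu < r'.nu ∨ c < c')

/-- The pointed element of a bicolored tree: a `1`-colored vertex keeps the point of its
left subtree and a `0`-colored vertex keeps the point of its right subtree. -/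
def ppt : BT → ℕ
  | leaf a => a
  | node c l r => if c then l.ppt else r.ppt

end BT

/-- `u`-merging of two pointed Lyndon trees: create a new root of color `u` with the two
trees as subtrees, then repeatedly slide the new vertex together with its right subtree
past its left child until the pointed Lyndon condition holds at the new vertex. -/
def mergeP (u : Bool) : BT → BT → BT
  | BT.leaf a, t2 => BT.node u (BT.leaf a) t2
  | BT.node c a b, t2 =>
      if u ≤ c ∧ ((c = true ∧ u = true) → t2.nu < b.nu)
      then BT.node u (BT.node c a b) t2
      else BT.node c (mergeP u a t2) b

/-- `u`-merging of two bicolored Lyndon trees: create a new root of color `u` with the two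
trees as subtrees, then repeatedly slide the new vertex together with its right subtree
past its left child until the bicolored Lyndon condition holds at the new vertex. -/
def mergeW (u : Bool) : BT → BT → BT
  | BT.leaf a, t2 => BT.node u (BT.leaf a) t2
  | BT.node c a b, t2 =>
      if t2.nu < b.nu ∨ u < c
      then BT.node u (BT.node c a b) t2
      else BT.node c (mergeW u a t2) b

/-- A valid forest on the ground set `[n]`, each tree normalized and satisfying `P`, the
trees having pairwise disjoint leaf sets which together cover `[n] = {1, …, n}`. -/
def ForestValid (n : ℕ) (P : BT → Prop) (F : Finset BT) : Prop :=
  (∀ t ∈ F, t.normalized ∧ P t) ∧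
  (∀ t ∈ F, ∀ t' ∈ F, t ≠ t' → Disjoint t.leaves t'.leaves) ∧
  F.biUnion BT.leaves = Finset.Icc 1 n

/-- The set of pointed Lyndon forests on `[n]`. -/
abbrev FLynP (n : ℕ) : Type := {F : Finset BT // ForestValid n BT.pLyn F}

/-- The set of bicolored Lyndon forests on `[n]`. -/
abbrev FLynW (n : ℕ) : Type := {F : Finset BT // ForestValid n BT.wLyn F}

/-- The cover relation on forests: `u`-merge two of the trees (the one with smaller minimum
leaf label going to the left). -/
def covForest (merge : Bool → BT → BT → BT) (F F' : Finset BT) : Prop :=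
  ∃ t1 ∈ F, ∃ t2 ∈ F, t1.nu < t2.nu ∧ ∃ u : Bool,
    F' = insert (merge u t1 t2) ((F.erase t1).erase t2)

/-- The cover relation of the poset of pointed Lyndon forests `FLyn_n^•`. -/
def covFP {n : ℕ} (F F' : FLynP n) : Prop := covForest mergeP F.1 F'.1

/-- The cover relation of the poset of bicolored Lyndon forests `FLyn_n^w`. -/
def covFW {n : ℕ} (F F' : FLynW n) : Prop := covForest mergeW F.1 F'.1

/-- The forest of `n` isolated leaves. -/
def botForest (n : ℕ) : Finset BT := (Finset.Icc 1 n).image BT.leaf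

theorem botForest_valid (n : ℕ) (P : BT → Prop) (hP : ∀ a, P (BT.leaf a)) :
    ForestValid n P (botForest n) := by
  refine ⟨?_, ?_, ?_⟩
  · intro t ht
    obtain ⟨i, -, rfl⟩ := Finset.mem_image.1 ht
    exact ⟨trivial, hP i⟩
  · intro t ht t' ht' hne
    obtain ⟨i, -, rfl⟩ := Finset.mem_image.1 ht
    obtain ⟨j, -, rfl⟩ := Finset.mem_image.1 ht'
    have hij : i ≠ j := fun h => hne (by rw [h])
    simp only [BT.leaves]
    simp [Finset.disjoint_left, hij]
  · ext x
    simp [botForest, BT.leaves]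

/-- The minimum of the poset of pointed Lyndon forests. -/
def botFP (n : ℕ) : FLynP n := ⟨botForest n, botForest_valid n _ fun _ => trivial⟩

/-- The minimum of the poset of bicolored Lyndon forests. -/
def botFW (n : ℕ) : FLynW n := ⟨botForest n, botForest_valid n _ fun _ => trivial⟩

/-- The rank of a forest: its total number of internal vertices. -/
def rkForest (F : Finset BT) : ℕ := F.sum BT.internals

/-- The rank function of `FLyn_n^•`. -/
def rkFP {n : ℕ} (F : FLynP n) : ℕ := rkForest F.1

/-- The rank function of `FLyn_n^w`. -/
def rkFW {n : ℕ} (F : FLynW n) : ℕ := rkForest F.1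

/-! ## The Whitney dual construction `R_λ(P)` -/

section RPoset

variable {α : Type*} {L : Type*}

/-- Swap the leftmost ascent of a word of labels. -/
noncomputable def swapFirstAscent (lt : L → L → Prop) : List L → List L
  | a :: b :: rest => if lt a b then b :: a :: rest else a :: swapFirstAscent lt (b :: rest)
  | w => w

/-- Sort a word of labels by repeatedly swapping its leftmost ascent until it is
ascent-free. -/
noncomputable def sortWord (lt : L → L → Prop) (w : List L) : List L :=
  (swapFirstAscent lt)^[w.length * w.length] w

/-- The underlying set of the Whitney dual `R_λ(P)`: pairs `(x, w)` where `w` is the label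
word of an ascent-free saturated chain from `0̂` to `x`. -/
abbrev RPoset (cov : α → α → Prop) (lab : α → α → L) (lt : L → L → Prop) (bot : α) : Type _ :=
  {q : α × List L //
    ∃ c, IsSatChain cov bot q.1 c ∧ AscFree lt (wordOf lab c) ∧ wordOf lab c = q.2}

/-- The cover relation of `R_λ(P)`: `(x, w) ⋖ (y, u)` iff `x ⋖ y` and `u` is obtained by
sorting the label of `x ⋖ y` into `w`. -/
def covR (cov : α → α → Prop) (lab : α → α → L) (lt : L → L → Prop) (bot : α)
    (p q : RPoset cov lab lt bot) : Prop :=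
  cov p.1.1 q.1.1 ∧ q.1.2 = sortWord lt (p.1.2 ++ [lab p.1.1 q.1.1])

end RPoset

/-! ## Reiner's poset of rooted spanning forests -/

/-- A rooted spanning forest on `[n]`, encoded by its parent function: `f i` is the parent
of the vertex `i` (`f i = i` for roots), vertices outside `[n]` being fixed, and every
vertex reaching a root after finitely many steps (acyclicity). -/
def SFvalid (n : ℕ) (f : ℕ → ℕ) : Prop :=
  (∀ i ∈ Finset.Icc 1 n, f i ∈ Finset.Icc 1 n) ∧
  (∀ i, i ∉ Finset.Icc 1 n → f i = i) ∧
  (∀ i, ∃ k, f^[k + 1] i = f^[k] i)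

/-- Reiner's poset `SF_n` of rooted spanning forests of the complete graph on `[n]`. -/
abbrev SF (n : ℕ) : Type := {f : ℕ → ℕ // SFvalid n f}

/-- The cover relation of `SF_n`: add an edge between the roots of two trees, one of the
two roots becoming the root of the merged tree. -/
def covSF {n : ℕ} (f g : SF n) : Prop :=
  ∃ r1 ∈ Finset.Icc 1 n, ∃ r2 ∈ Finset.Icc 1 n, r1 ≠ r2 ∧
    f.1 r1 = r1 ∧ f.1 r2 = r2 ∧
    (g.1 = Function.update f.1 r1 r2 ∨ g.1 = Function.update f.1 r2 r1)

/-- The rank of a rooted spanning forest: its number of edges. -/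
def rkSF {n : ℕ} (f : SF n) : ℕ := ((Finset.Icc 1 n).filter fun i => f.1 i ≠ i).card
/-! ## Further constructions used in particular statements -/

/-- The map `Φ` on underlying finsets: a pointed block `(B, q)` of a pointed partition
above `α` is sent to the set of minima of the `α`-blocks contained in `B`, pointed at the
minimum of the `α`-block containing `q`. -/
noncomputable def PhiMap (af : Finset (Finset ℕ × ℕ)) (pf : Finset (Finset ℕ × ℕ)) :
    Finset (Finset ℕ × ℕ) :=
  pf.image fun b =>
    ((af.filter fun c => c.1 ⊆ b.1).image fun c => minB c.1,
     WithTop.untopD 0 ((af.filter fun c => b.2 ∈ c.1).image fun c => minB c.1).min)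

/-- The expected word of labels of the unique increasing maximal chain of the interval
`[0̂, [n]^p]` of the pointed partition poset:
`(1,2)¹ ⋯ (1,n)¹` if `p = 1`, and `(1,p)⁰ (1,2)¹ ⋯ (1,p-1)¹ (1,p+1)¹ ⋯ (1,n)¹` otherwise. -/
def expectedWordP (n p : ℕ) : List (ℕ × ℕ × Bool) :=
  let base := (List.range (n - 1)).map fun i => ((1 : ℕ), i + 2, true)
  if p = 1 then base else ((1 : ℕ), p, false) :: base.erase (1, p, true)

/-- Merge two words of labels, each with non-increasing first components, into a single
word with non-increasing first components. -/
def mergeByNu : List (ℕ × ℕ × Bool) → List (ℕ × ℕ × Bool) → List (ℕ × ℕ × Bool)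
  | [], ys => ys
  | xs, [] => xs
  | x :: xs, y :: ys =>
      if y.1 ≤ x.1 then x :: mergeByNu xs (y :: ys) else y :: mergeByNu (x :: xs) ys
termination_by xs ys => xs.length + ys.length

/-- The word of labels of a tree read along the reverse-minimal linear extension of its
internal vertices: the internal vertex `v` contributes `(ν (L v), ν (R v), color v)`, the
vertices being listed with non-increasing valencies (descendants first among equal
valencies). -/
def BT.rmword : BT → List (ℕ × ℕ × Bool)
  | BT.leaf _ => []
  | BT.node c l r => mergeByNu l.rmword r.rmword ++ [(l.nu, r.nu, c)]

/-- The word of labels of the saturated chain `c(F)` associated to a forest `F`, read along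
the reverse-minimal linear extension of the internal vertices of `F`. -/
noncomputable def forestWord (F : Finset BT) : List (ℕ × ℕ × Bool) :=
  (F.toList.map BT.rmword).foldr mergeByNu []

/-- `TLyn_{n,p}^•`: pointed Lyndon trees on `[n]` whose associated chain ends at `[n]^p`,
i.e. whose tracked pointed element is `p`. -/
abbrev TLynBullet (n p : ℕ) : Type :=
  {T : BT // T.normalized ∧ T.pLyn ∧ T.leaves = Finset.Icc 1 n ∧ T.ppt = p}

/-- The labeling `λ̃` of `Πₙ•` proposed by Bellier-Millès, Delcroix-Oger and Hoffbeck: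
the cover `u`-merging blocks with minima `a < b` in a pointed partition `π` with `|π|`
blocks is labeled `(b, a + n - |π|)` if `u = 0` and `(b, b + n - |π|)` if `u = 1`. -/
noncomputable def labT (n : ℕ) {A : Finset ℕ} (π π' : PPart A) : ℕ × ℕ :=
  let olds := π.1 \ π'.1
  let mins := olds.image fun b => minB b.1
  let a := WithTop.untopD 0 mins.min
  let b := WithBot.unbotD 0 mins.max
  if ∃ c ∈ olds, minB c.1 = a ∧ ∃ d ∈ π'.1 \ π.1, d.2 = c.2
  then (b, b + n - π.1.card)
  else (b, a + n - π.1.card)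

/-- The (strict) lexicographic order on `ℕ × ℕ`. -/
def ltT (x y : ℕ × ℕ) : Prop := x.1 < y.1 ∨ (x.1 = y.1 ∧ x.2 < y.2)

/-!
Read `c(F)` backwards: its last step grafts the two subtrees `l, r` of the root of smallest
valency, and removing that root leaves a pointed Lyndon forest `G` such that `c(F)` is `c(G)`
followed by `F`.
When two trees `t₁, t₂` of `G` are grafted under a root of color `u`, the last label of `c(G)` is
not below `(ν t₁, ν t₂)ᵘ` in `Λₙ•` exactly when the new vertex satisfies the pointed Lyndon
condition and has the smallest valency among the roots of non-leaf trees. By induction this makes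
every `c(F)` ascent-free, and every ascent-free one-cover extension of `c(G)` the chain of a
grafted pointed Lyndon forest. Injectivity already holds for words: the last letter of the word
of `F` names the two trees of `G` that were grafted, and `G` is determined by the rest.
-/

section Words

variable {α L : Type*}

theorem wordOf_concat (lab : α → α → L) {x : α} (y : α) :
    ∀ {c : List α}, c.getLast? = some x → wordOf lab (c ++ [y]) = wordOf lab c ++ [lab x y]
  | [], h => by simp at h
  | [a], h => by
      rw [List.getLast?_singleton, Option.some_inj] at h
      subst h
      rfl
  | a :: b :: c, h => by
      rw [List.getLast?_cons_cons] at h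
      exact congrArg (lab a b :: ·) (wordOf_concat lab y h)

theorem isChain_concat_iff {R : α → α → Prop} {c : List α} {y : α} :
    (c ++ [y]).IsChain R ↔ c.IsChain R ∧ ∀ x ∈ c.getLast?, R x y := by
  simp [List.isChain_append]

end Words

section MergeByNu

theorem mergeByNu_eq_merge (xs ys : List (ℕ × ℕ × Bool)) :
    mergeByNu xs ys = xs.merge ys fun x y => y.1 ≤ x.1 := by
  fun_induction mergeByNu xs ys <;> simp_all

theorem mem_mergeByNu {x : ℕ × ℕ × Bool} {xs ys : List (ℕ × ℕ × Bool)} :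
    x ∈ mergeByNu xs ys ↔ x ∈ xs ∨ x ∈ ys := by
  rw [mergeByNu_eq_merge, List.mem_merge]

@[simp]
theorem mergeByNu_nil_left (ys : List (ℕ × ℕ × Bool)) : mergeByNu [] ys = ys := by
  rw [mergeByNu]

@[simp]
theorem mergeByNu_nil_right (xs : List (ℕ × ℕ × Bool)) : mergeByNu xs [] = xs := by
  cases xs <;> simp [mergeByNu]

theorem mergeByNu_cons_cons (x y : ℕ × ℕ × Bool) (xs ys : List (ℕ × ℕ × Bool)) :
    mergeByNu (x :: xs) (y :: ys) =
      if y.1 ≤ x.1 then x :: mergeByNu xs (y :: ys) else y :: mergeByNu (x :: xs) ys := by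
  rw [mergeByNu]

theorem mergeByNu_assoc : ∀ u v w : List (ℕ × ℕ × Bool),
    mergeByNu (mergeByNu u v) w = mergeByNu u (mergeByNu v w)
  | [], v, w => by simp
  | x :: xs, [], w => by simp
  | x :: xs, y :: ys, [] => by simp
  | x :: xs, y :: ys, z :: zs => by
      by_cases h₁ : y.1 ≤ x.1 <;> by_cases h₂ : z.1 ≤ y.1
      · have h₃ : z.1 ≤ x.1 := h₂.trans h₁
        simp [mergeByNu_cons_cons, h₁, h₂, h₃, mergeByNu_assoc xs (y :: ys) (z :: zs)]
      · by_cases h₃ : z.1 ≤ x.1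
        · simp [mergeByNu_cons_cons, h₁, h₂, h₃, mergeByNu_assoc xs (y :: ys) (z :: zs)]
        · have ih := mergeByNu_assoc (x :: xs) (y :: ys) zs
          simp only [mergeByNu_cons_cons, if_pos h₁] at ih
          simp [mergeByNu_cons_cons, h₁, h₂, h₃, ih]
      · simp [mergeByNu_cons_cons, h₁, h₂, mergeByNu_assoc (x :: xs) ys (z :: zs)]
      · have h₃ : ¬ z.1 ≤ x.1 := fun h => h₂ (h.trans (le_of_not_ge h₁))
        have ih := mergeByNu_assoc (x :: xs) (y :: ys) zs
        simp only [mergeByNu_cons_cons, if_neg h₁] at ih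
        simp [mergeByNu_cons_cons, h₁, h₂, h₃, ih]
  termination_by u v w => u.length + v.length + w.length

theorem mergeByNu_comm : ∀ u v : List (ℕ × ℕ × Bool),
    (∀ x ∈ u, ∀ y ∈ v, x.1 ≠ y.1) → mergeByNu u v = mergeByNu v u
  | [], v, _ => by simp
  | x :: xs, [], _ => by simp
  | x :: xs, y :: ys, h => by
      have hxy : x.1 ≠ y.1 := h x (by simp) y (by simp)
      rcases hxy.lt_or_gt with hlt | hlt
      · rw [mergeByNu_cons_cons, if_neg (by omega), mergeByNu_cons_cons, if_pos hlt.le,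
          mergeByNu_comm (x :: xs) ys fun a ha b hb => h a ha b (List.mem_cons_of_mem _ hb)]
      · rw [mergeByNu_cons_cons, if_pos hlt.le, mergeByNu_cons_cons, if_neg (by omega),
          mergeByNu_comm xs (y :: ys) fun a ha b hb => h a (List.mem_cons_of_mem _ ha) b hb]
  termination_by u v => u.length + v.length

theorem mergeByNu_concat_of_lt : ∀ (u v : List (ℕ × ℕ × Bool)) (m : ℕ × ℕ × Bool),
    (∀ y ∈ v, m.1 < y.1) → mergeByNu (u ++ [m]) v = mergeByNu u v ++ [m]
  | u, [], m, _ => by simp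
  | u, y :: ys, m, h => by
      have hy : m.1 < y.1 := h y (by simp)
      have ih := mergeByNu_concat_of_lt u ys m fun a ha => h a (List.mem_cons_of_mem _ ha)
      cases u with
      | nil => simp_all [mergeByNu_cons_cons, if_neg (show ¬ y.1 ≤ m.1 by omega)]
      | cons x xs =>
          rw [List.cons_append, mergeByNu_cons_cons, mergeByNu_cons_cons]
          by_cases hc : y.1 ≤ x.1
          · rw [if_pos hc, if_pos hc, mergeByNu_concat_of_lt xs (y :: ys) m h, List.cons_append]
          · rw [if_neg hc, if_neg hc, ← List.cons_append, ih, List.cons_append]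
  termination_by u v => u.length + v.length

theorem foldr_mergeByNu_perm {l₁ l₂ : List (List (ℕ × ℕ × Bool))} (hp : l₁.Perm l₂)
    (hl₁ : l₁.Pairwise fun u v => ∀ x ∈ u, ∀ y ∈ v, x.1 ≠ y.1) :
    l₁.foldr mergeByNu [] = l₂.foldr mergeByNu [] := by
  induction hp with
  | nil => rfl
  | cons x _ ih => simp only [List.foldr_cons, ih (List.Pairwise.of_cons hl₁)]
  | swap x y t =>
      have hxy := (List.pairwise_cons.1 hl₁).1 x (by simp)
      simp only [List.foldr_cons]
      rw [← mergeByNu_assoc, ← mergeByNu_assoc, mergeByNu_comm y x hxy]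
  | trans p₁ _ ih₁ ih₂ =>
      have hl₂ := (p₁.pairwise_iff fun h x hx y hy => (h y hy x hx).symm).1 hl₁
      exact (ih₁ hl₁).trans (ih₂ hl₂)

end MergeByNu

namespace BT

def IsLeaf : BT → Prop
  | leaf _ => True
  | node .. => False

theorem isLeaf_iff {t : BT} : t.IsLeaf ↔ ∃ a, t = leaf a := by
  cases t <;> simp [IsLeaf]

theorem leaves_nonempty : ∀ t : BT, t.leaves.Nonempty
  | leaf a => ⟨a, by simp [leaves]⟩
  | node _ l _ => (leaves_nonempty l).mono Finset.subset_union_left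

theorem nu_mem_leaves : ∀ t : BT, t.nu ∈ t.leaves
  | leaf a => by simp [nu, leaves]
  | node _ l r => by
      rcases min_choice l.nu r.nu with h | h <;>
        simp [nu, leaves, h, nu_mem_leaves l, nu_mem_leaves r]

theorem nu_le_of_mem_leaves : ∀ (t : BT) {a : ℕ}, a ∈ t.leaves → t.nu ≤ a
  | leaf b, a, ha => by simp_all [nu, leaves]
  | node _ l r, a, ha => by
      rcases Finset.mem_union.1 ha with ha | ha
      · exact (min_le_left _ _).trans (nu_le_of_mem_leaves l ha)
      · exact (min_le_right _ _).trans (nu_le_of_mem_leaves r ha)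

theorem minB_leaves (t : BT) : minB t.leaves = t.nu := by
  have : t.leaves.min = t.nu := le_antisymm (Finset.min_le t.nu_mem_leaves)
    (Finset.le_min fun a ha => WithTop.coe_le_coe.2 (t.nu_le_of_mem_leaves ha))
  rw [minB, this]
  rfl

theorem ppt_mem_leaves : ∀ t : BT, t.ppt ∈ t.leaves
  | leaf a => by simp [ppt, leaves]
  | node c l r => by cases c <;> simp [ppt, leaves, ppt_mem_leaves l, ppt_mem_leaves r]

theorem nu_node {c : Bool} {l r : BT} (h : l.nu < r.nu) : (node c l r).nu = l.nu :=
  min_eq_left h.le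

theorem left_ne_node (c : Bool) (l r : BT) : l ≠ node c l r := fun h => by
  have := congrArg sizeOf h
  simp at this
  omega

theorem right_ne_node (c : Bool) (l r : BT) : r ≠ node c l r := fun h => by
  have := congrArg sizeOf h
  simp at this

theorem decide_ppt_node_eq_left {u : Bool} {l r : BT} (h : l.ppt ≠ r.ppt) :
    decide ((node u l r).ppt = l.ppt) = u := by
  cases u <;> simp [ppt, Ne.symm h]

end BT

open BT

section Forest

variable {n : ℕ} {P : BT → Prop} {F : Finset BT} {c : Bool} {l r t t' : BT}

noncomputable def nonLeaves (F : Finset BT) : Finset BT := F.filter fun t => ¬ t.IsLeaf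

theorem mem_nonLeaves : t ∈ nonLeaves F ↔ t ∈ F ∧ ¬ t.IsLeaf := Finset.mem_filter

theorem ForestValid.pairwiseDisjoint (hF : ForestValid n P F) :
    (F : Set BT).PairwiseDisjoint BT.leaves :=
  fun t ht t' ht' hne => hF.2.1 t ht t' ht' hne

theorem ForestValid.nu_lt_nu_of_node_mem (hF : ForestValid n P F) (h : node c l r ∈ F) :
    l.nu < r.nu :=
  (hF.1 _ h).1.2.2.2

theorem ForestValid.eq_of_nu_eq (hF : ForestValid n P F) (ht : t ∈ F) (ht' : t' ∈ F)
    (h : t.nu = t'.nu) : t = t' := by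
  by_contra hne
  exact Finset.disjoint_left.1 (hF.2.1 t ht t' ht' hne) t.nu_mem_leaves (h ▸ t'.nu_mem_leaves)

theorem ForestValid.eq_of_leaves_eq (hF : ForestValid n P F) (ht : t ∈ F) (ht' : t' ∈ F)
    (h : t.leaves = t'.leaves) : t = t' := by
  by_contra hne
  obtain ⟨a, ha⟩ := t.leaves_nonempty
  exact Finset.disjoint_left.1 (hF.2.1 t ht t' ht' hne) ha (h ▸ ha)

theorem ForestValid.ppt_ne (hF : ForestValid n P F) (ht : t ∈ F) (ht' : t' ∈ F)
    (hne : t ≠ t') : t.ppt ≠ t'.ppt := fun h =>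
  Finset.disjoint_left.1 (hF.2.1 t ht t' ht' hne) t.ppt_mem_leaves (h ▸ t'.ppt_mem_leaves)

theorem ForestValid.eq_botForest (hF : ForestValid n P F) (h : nonLeaves F = ∅) :
    F = botForest n := by
  have hleaf : ∀ t ∈ F, ∃ a, t = leaf a := fun t ht =>
    isLeaf_iff.1 (not_not.1 fun hn => Finset.notMem_empty t (h ▸ mem_nonLeaves.2 ⟨ht, hn⟩))
  have hcover : ∀ a, a ∈ Finset.Icc 1 n ↔ ∃ t ∈ F, a ∈ t.leaves := by
    simp [← hF.2.2]
  ext t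
  simp only [botForest, Finset.mem_image]
  constructor
  · intro ht
    obtain ⟨a, rfl⟩ := hleaf t ht
    exact ⟨a, (hcover a).2 ⟨_, ht, by simp [leaves]⟩, rfl⟩
  · rintro ⟨a, ha, rfl⟩
    obtain ⟨s, hs, has⟩ := (hcover a).1 ha
    obtain ⟨b, rfl⟩ := hleaf s hs
    simp only [leaves, Finset.mem_singleton] at has
    exact has ▸ hs

theorem nonLeaves_botForest (n : ℕ) : nonLeaves (botForest n) = ∅ := by
  refine Finset.filter_eq_empty_iff.2 fun t ht => ?_
  obtain ⟨a, -, rfl⟩ := Finset.mem_image.1 ht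
  exact not_not.2 trivial

def blocks (F : Finset BT) : Finset (Finset ℕ × ℕ) := F.image fun t => (t.leaves, t.ppt)

theorem ForestValid.isPPart_blocks (hF : ForestValid n P F) :
    (∀ b ∈ blocks F, b.2 ∈ b.1) ∧
    (∀ b ∈ blocks F, ∀ b' ∈ blocks F, b ≠ b' → Disjoint b.1 b'.1) ∧
    (blocks F).biUnion Prod.fst = Finset.Icc 1 n := by
  refine ⟨?_, ?_, ?_⟩
  · simp only [blocks, Finset.mem_image]
    rintro _ ⟨t, -, rfl⟩
    exact t.ppt_mem_leaves
  · simp only [blocks, Finset.mem_image]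
    rintro _ ⟨t, ht, rfl⟩ _ ⟨t', ht', rfl⟩ hne
    exact hF.2.1 t ht t' ht' fun h => hne (h ▸ rfl)
  · rw [← hF.2.2, blocks, Finset.image_biUnion]

theorem blocks_botForest (n : ℕ) : blocks (botForest n) = (botPP (Finset.Icc 1 n)).1 := by
  rw [blocks, botForest, Finset.image_image]
  rfl

end Forest

section ForestWord

variable {F : Finset BT} {t : BT}

theorem BT.fst_mem_leaves_of_mem_rmword :
    ∀ {t : BT} {x : ℕ × ℕ × Bool}, x ∈ t.rmword → x.1 ∈ t.leaves
  | leaf _, _, h => by simp [rmword] at h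
  | node c l r, x, h => by
      rw [rmword, List.mem_append, mem_mergeByNu, List.mem_singleton] at h
      rcases h with (h | h) | rfl
      · exact Finset.mem_union_left _ (fst_mem_leaves_of_mem_rmword h)
      · exact Finset.mem_union_right _ (fst_mem_leaves_of_mem_rmword h)
      · exact Finset.mem_union_left _ l.nu_mem_leaves

theorem mem_forestWord {x : ℕ × ℕ × Bool} :
    x ∈ forestWord F ↔ ∃ t ∈ F, x ∈ t.rmword := by
  suffices h : ∀ L : List BT,
      x ∈ (L.map rmword).foldr mergeByNu [] ↔ ∃ t ∈ L, x ∈ t.rmword by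
    simpa [forestWord] using h F.toList
  intro L
  induction L <;> simp_all [mem_mergeByNu]

theorem forestWord_eq_nil (h : nonLeaves F = ∅) : forestWord F = [] := by
  refine List.eq_nil_iff_forall_not_mem.2 fun x hx => ?_
  obtain ⟨t, ht, hxt⟩ := mem_forestWord.1 hx
  cases t with
  | leaf a => simp [rmword] at hxt
  | node c l r => exact Finset.notMem_empty _ (h ▸ mem_nonLeaves.2 ⟨ht, id⟩)

/-- `forestWord` folds over an arbitrary enumeration of `F`; the result does not depend on it
because trees with disjoint leaves contribute letters with distinct first components. -/
theorem forestWord_insert (ht : t ∉ F)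
    (hd : (↑(insert t F) : Set BT).PairwiseDisjoint BT.leaves) :
    forestWord (insert t F) = mergeByNu t.rmword (forestWord F) := by
  have hpw : ((insert t F).toList.map rmword).Pairwise
      fun u v => ∀ x ∈ u, ∀ y ∈ v, x.1 ≠ y.1 := by
    rw [List.pairwise_map]
    refine (Finset.nodup_toList _).imp_of_mem fun ha hb hne x hx y hy he => ?_
    exact Finset.disjoint_left.1 (hd (Finset.mem_toList.1 ha) (Finset.mem_toList.1 hb) hne)
      (fst_mem_leaves_of_mem_rmword hx) (he ▸ fst_mem_leaves_of_mem_rmword hy)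
  rw [forestWord, foldr_mergeByNu_perm ((Finset.toList_insert ht).map _) hpw]
  rfl

end ForestWord

theorem insert_insert_erase_erase {α : Type*} [DecidableEq α] {s : Finset α} {a b : α}
    (ha : a ∈ s) (hb : b ∈ s) (hab : a ≠ b) :
    insert a (insert b ((s.erase a).erase b)) = s := by
  rw [Finset.insert_erase (Finset.mem_erase.2 ⟨hab.symm, hb⟩), Finset.insert_erase ha]

section Graft

variable {n : ℕ} {P : BT → Prop} {G : Finset BT} {t1 t2 s : BT} {u : Bool}

def graft (G : Finset BT) (t1 t2 : BT) (u : Bool) : Finset BT :=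
  insert (node u t1 t2) ((G.erase t1).erase t2)

theorem mem_graft :
    s ∈ graft G t1 t2 u ↔ s = node u t1 t2 ∨ s ∈ G ∧ s ≠ t1 ∧ s ≠ t2 := by
  simp only [graft, Finset.mem_insert, Finset.mem_erase]
  tauto

theorem ForestValid.node_notMem (hG : ForestValid n P G) (ht1 : t1 ∈ G) :
    node u t1 t2 ∉ G := fun h => by
  obtain ⟨a, ha⟩ := t1.leaves_nonempty
  exact Finset.disjoint_left.1 (hG.2.1 _ h t1 ht1 (left_ne_node u t1 t2).symm)
    (Finset.mem_union_left _ ha) ha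

theorem ForestValid.pairwiseDisjoint_graft (hG : ForestValid n P G) (ht1 : t1 ∈ G)
    (ht2 : t2 ∈ G) : (↑(graft G t1 t2 u) : Set BT).PairwiseDisjoint BT.leaves := by
  have hnode : ∀ s ∈ G, s ≠ t1 → s ≠ t2 → Disjoint (node u t1 t2).leaves s.leaves :=
    fun s hs h1 h2 => Finset.disjoint_union_left.2
      ⟨hG.2.1 t1 ht1 s hs (Ne.symm h1), hG.2.1 t2 ht2 s hs (Ne.symm h2)⟩
  intro s hs s' hs' hne
  rcases mem_graft.1 hs with rfl | ⟨hs, hs1, hs2⟩ <;>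
    rcases mem_graft.1 hs' with rfl | ⟨hs', hs1', hs2'⟩
  · exact absurd rfl hne
  · exact hnode s' hs' hs1' hs2'
  · exact (hnode s hs hs1 hs2).symm
  · exact hG.2.1 s hs s' hs' hne

theorem forestValid_graft (hG : ForestValid n P G) (ht1 : t1 ∈ G) (ht2 : t2 ∈ G)
    (hnu : t1.nu < t2.nu) (hP : P (node u t1 t2)) : ForestValid n P (graft G t1 t2 u) := by
  have hne : t1 ≠ t2 := ne_of_apply_ne BT.nu hnu.ne
  refine ⟨fun s hs => ?_, hG.pairwiseDisjoint_graft ht1 ht2, ?_⟩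
  · rcases mem_graft.1 hs with rfl | ⟨hs, -, -⟩
    · exact ⟨⟨(hG.1 t1 ht1).1, (hG.1 t2 ht2).1, hG.2.1 t1 ht1 t2 ht2 hne, hnu⟩, hP⟩
    · exact hG.1 s hs
  · conv_rhs => rw [← hG.2.2, ← insert_insert_erase_erase ht1 ht2 hne]
    simp only [graft, Finset.biUnion_insert, BT.leaves, Finset.union_assoc]

theorem rkForest_graft (hG : ForestValid n P G) (ht1 : t1 ∈ G) (ht2 : t2 ∈ G)
    (hne : t1 ≠ t2) : rkForest (graft G t1 t2 u) = rkForest G + 1 := by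
  have h2 : t2 ∉ (G.erase t1).erase t2 := Finset.notMem_erase _ _
  have h1 : t1 ∉ insert t2 ((G.erase t1).erase t2) := by simp [hne]
  have hT : node u t1 t2 ∉ (G.erase t1).erase t2 := fun h =>
    hG.node_notMem ht1 (Finset.mem_of_mem_erase (Finset.mem_of_mem_erase h))
  conv_rhs => rw [← insert_insert_erase_erase ht1 ht2 hne]
  rw [rkForest, rkForest, graft, Finset.sum_insert hT, Finset.sum_insert h1, Finset.sum_insert h2,
    BT.internals]
  omega

theorem blocks_graft (hG : ForestValid n P G) (ht1 : t1 ∈ G) (ht2 : t2 ∈ G) :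
    blocks (graft G t1 t2 u) = insert (t1.leaves ∪ t2.leaves, (node u t1 t2).ppt)
      (((blocks G).erase (t1.leaves, t1.ppt)).erase (t2.leaves, t2.ppt)) := by
  have hinj : ∀ s ∈ G, ∀ s' ∈ G, (s.leaves, s.ppt) = (s'.leaves, s'.ppt) → s = s' :=
    fun s hs s' hs' h => hG.eq_of_leaves_eq hs hs' (congrArg Prod.fst h)
  ext b
  simp only [blocks, graft, Finset.mem_image, Finset.mem_insert, Finset.mem_erase]
  constructor
  · rintro ⟨s, rfl | ⟨hs2, hs1, hs⟩, rfl⟩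
    · exact Or.inl rfl
    · exact Or.inr ⟨fun h => hs2 (hinj s hs t2 ht2 h), fun h => hs1 (hinj s hs t1 ht1 h),
        s, hs, rfl⟩
  · rintro (rfl | ⟨h2, h1, s, hs, rfl⟩)
    · exact ⟨_, Or.inl rfl, rfl⟩
    · exact ⟨s, Or.inr ⟨fun h => h2 (h ▸ rfl), fun h => h1 (h ▸ rfl), hs⟩, rfl⟩

/-- The new root of `graft G t1 t2 u` then has the smallest valency of all roots of non-leaf
trees, so this graft is the last step of the chain of the grafted forest. -/
structure IsLastGraft (G : Finset BT) (t1 t2 : BT) : Prop where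
  left_mem : t1 ∈ G
  right_mem : t2 ∈ G
  nu_lt : t1.nu < t2.nu
  nu_lt_of_mem_nonLeaves : ∀ s ∈ nonLeaves G, s ≠ t1 → t1.nu < s.nu

theorem forestWord_graft (hG : ForestValid n P G) (h : IsLastGraft G t1 t2) (u : Bool) :
    forestWord (graft G t1 t2 u) = forestWord G ++ [(t1.nu, t2.nu, u)] := by
  have hne : t1 ≠ t2 := ne_of_apply_ne BT.nu h.nu_lt.ne
  set E := (G.erase t1).erase t2 with hE
  have hT : node u t1 t2 ∉ E := fun hT =>
    hG.node_notMem h.left_mem (Finset.mem_of_mem_erase (Finset.mem_of_mem_erase hT))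
  have hGE : insert t1 (insert t2 E) = G := insert_insert_erase_erase h.left_mem h.right_mem hne
  have hd : (↑(insert t1 (insert t2 E)) : Set BT).PairwiseDisjoint BT.leaves :=
    hGE ▸ hG.pairwiseDisjoint
  have hlarge : ∀ y ∈ forestWord E, t1.nu < y.1 := by
    intro y hy
    obtain ⟨s, hsE, hys⟩ := mem_forestWord.1 hy
    have hsG : s ∈ G := Finset.mem_of_mem_erase (Finset.mem_of_mem_erase hsE)
    have hsleaf : ¬ s.IsLeaf := fun hl => by
      obtain ⟨a, rfl⟩ := isLeaf_iff.1 hl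
      simp [rmword] at hys
    exact (h.nu_lt_of_mem_nonLeaves s (mem_nonLeaves.2 ⟨hsG, hsleaf⟩)
      (Finset.ne_of_mem_erase (Finset.mem_of_mem_erase hsE))).trans_le
      (s.nu_le_of_mem_leaves (fst_mem_leaves_of_mem_rmword hys))
  have hG' : forestWord G = mergeByNu t1.rmword (mergeByNu t2.rmword (forestWord E)) := by
    rw [← hGE, forestWord_insert (by simp [hE, hne]) hd,
      forestWord_insert (Finset.notMem_erase _ _) (hd.subset (Finset.subset_insert _ _))]
  rw [graft, ← hE, forestWord_insert hT (hG.pairwiseDisjoint_graft h.left_mem h.right_mem), hG',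
    rmword, mergeByNu_concat_of_lt _ _ _ hlarge, mergeByNu_assoc]

end Graft

section Peel

variable {n : ℕ} {P : BT → Prop} {F G : Finset BT} {c u : Bool} {l r s t t1 t2 : BT}

/-- The root of the non-leaf tree of minimal valency is the last internal vertex of the forest in
the reverse-minimal order. -/
noncomputable def minTree (F : Finset BT) : BT :=
  if h : (nonLeaves F).Nonempty then (Finset.exists_min_image _ BT.nu h).choose else leaf 0

theorem minTree_spec (h : (nonLeaves F).Nonempty) :
    minTree F ∈ nonLeaves F ∧ ∀ t ∈ nonLeaves F, (minTree F).nu ≤ t.nu := by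
  rw [minTree, dif_pos h]
  exact (Finset.exists_min_image _ BT.nu h).choose_spec

theorem minTree_eq_of_forall_lt (ht : t ∈ nonLeaves F)
    (hmin : ∀ s ∈ nonLeaves F, s ≠ t → t.nu < s.nu) : minTree F = t := by
  by_contra hne
  have h₁ := (minTree_spec ⟨t, ht⟩).2 t ht
  have h₂ := hmin _ (minTree_spec ⟨t, ht⟩).1 hne
  omega

theorem exists_minTree_eq_node (h : (nonLeaves F).Nonempty) :
    ∃ c l r, minTree F = node c l r := by
  have hleaf := (mem_nonLeaves.1 (minTree_spec h).1).2
  cases hm : minTree F with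
  | leaf a => simp [hm, IsLeaf] at hleaf
  | node c l r => exact ⟨c, l, r, rfl⟩

theorem minTree_mem_nonLeaves (hmt : minTree F = node c l r) : node c l r ∈ nonLeaves F := by
  by_cases h : (nonLeaves F).Nonempty
  · exact hmt ▸ (minTree_spec h).1
  · rw [minTree, dif_neg h] at hmt
    cases hmt

theorem minTree_mem (hmt : minTree F = node c l r) : node c l r ∈ F :=
  (mem_nonLeaves.1 (minTree_mem_nonLeaves hmt)).1

theorem ForestValid.nu_le_of_minTree_eq (hF : ForestValid n P F) (hmt : minTree F = node c l r)
    (hs : s ∈ nonLeaves F) : l.nu ≤ s.nu := by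
  have hle := (minTree_spec ⟨_, minTree_mem_nonLeaves hmt⟩).2 s hs
  rwa [hmt, nu_node (hF.nu_lt_nu_of_node_mem (minTree_mem hmt))] at hle

theorem ForestValid.nu_lt_of_minTree_eq (hF : ForestValid n P F) (hmt : minTree F = node c l r)
    (hs : s ∈ nonLeaves F) (hsT : s ≠ node c l r) : l.nu < s.nu := by
  refine (hF.nu_le_of_minTree_eq hmt hs).lt_of_ne fun heq => hsT ?_
  refine hF.eq_of_nu_eq (mem_nonLeaves.1 hs).1 (minTree_mem hmt) ?_
  rw [nu_node (hF.nu_lt_nu_of_node_mem (minTree_mem hmt)), heq]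

noncomputable def peel (F : Finset BT) : Finset BT :=
  match minTree F with
  | leaf _ => F
  | node _ l r => insert l (insert r (F.erase (minTree F)))

theorem peel_eq (hmt : minTree F = node c l r) :
    peel F = insert l (insert r (F.erase (node c l r))) := by
  unfold peel
  rw [hmt]

theorem ForestValid.left_notMem (hF : ForestValid n P F) (h : node c l r ∈ F) : l ∉ F := by
  intro hl
  obtain ⟨a, ha⟩ := l.leaves_nonempty
  exact Finset.disjoint_left.1 (hF.2.1 l hl _ h (left_ne_node c l r)) ha
    (Finset.mem_union_left _ ha)

theorem ForestValid.right_notMem (hF : ForestValid n P F) (h : node c l r ∈ F) : r ∉ F := by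
  intro hr
  obtain ⟨a, ha⟩ := r.leaves_nonempty
  exact Finset.disjoint_left.1 (hF.2.1 r hr _ h (right_ne_node c l r)) ha
    (Finset.mem_union_right _ ha)

theorem forestValid_peel (hF : ForestValid n BT.pLyn F) (h : (nonLeaves F).Nonempty) :
    ForestValid n BT.pLyn (peel F) := by
  obtain ⟨c, l, r, hmt⟩ := exists_minTree_eq_node h
  have hT := minTree_mem hmt
  obtain ⟨⟨hl, hr, hlr, -⟩, hpl, hpr, -⟩ := hF.1 _ hT
  have hsplit : ∀ s ∈ F, s ≠ node c l r →
      Disjoint l.leaves s.leaves ∧ Disjoint r.leaves s.leaves :=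
    fun s hs hne => Finset.disjoint_union_left.1 (hF.2.1 _ hT s hs hne.symm)
  have hmem : ∀ {s}, s ∈ peel F ↔ s = l ∨ s = r ∨ s ∈ F ∧ s ≠ node c l r := by
    simp only [peel_eq hmt, Finset.mem_insert, Finset.mem_erase]
    tauto
  refine ⟨fun s hs => ?_, fun s hs s' hs' hne => ?_, ?_⟩
  · rcases hmem.1 hs with rfl | rfl | ⟨hs, -⟩
    exacts [⟨hl, hpl⟩, ⟨hr, hpr⟩, hF.1 s hs]
  · rcases hmem.1 hs with rfl | rfl | ⟨hs, hsT⟩ <;>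
      rcases hmem.1 hs' with rfl | rfl | ⟨hs', hsT'⟩
    exacts [absurd rfl hne, hlr, (hsplit s' hs' hsT').1, hlr.symm, absurd rfl hne,
      (hsplit s' hs' hsT').2, (hsplit s hs hsT).1.symm, (hsplit s hs hsT).2.symm,
      hF.2.1 s hs s' hs' hne]
  · rw [← hF.2.2, peel_eq hmt]
    conv_rhs => rw [← Finset.insert_erase hT]
    simp only [Finset.biUnion_insert, BT.leaves, Finset.union_assoc]

theorem graft_peel (hF : ForestValid n P F) (hmt : minTree F = node c l r) :
    graft (peel F) l r c = F := by
  have hT := minTree_mem hmt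
  have hlr : l ≠ r := ne_of_apply_ne BT.nu (hF.nu_lt_nu_of_node_mem hT).ne
  have hr : r ∉ F.erase (node c l r) := fun h => hF.right_notMem hT (Finset.mem_of_mem_erase h)
  have hl : l ∉ insert r (F.erase (node c l r)) := by
    simp [hlr, hF.left_notMem hT]
  rw [graft, peel_eq hmt, Finset.erase_insert hl, Finset.erase_insert hr, Finset.insert_erase hT]

theorem isLastGraft_peel (hF : ForestValid n P F) (hmt : minTree F = node c l r) :
    IsLastGraft (peel F) l r := by
  have hlr := hF.nu_lt_nu_of_node_mem (minTree_mem hmt)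
  refine ⟨by simp [peel_eq hmt], by simp [peel_eq hmt], hlr, fun s hs hsl => ?_⟩
  obtain ⟨hs, hsleaf⟩ := mem_nonLeaves.1 hs
  simp only [peel_eq hmt, Finset.mem_insert, Finset.mem_erase] at hs
  rcases hs with rfl | rfl | ⟨hsT, hs⟩
  · exact absurd rfl hsl
  · exact hlr
  · exact hF.nu_lt_of_minTree_eq hmt (mem_nonLeaves.2 ⟨hs, hsleaf⟩) hsT

theorem peel_graft (hG : ForestValid n P G) (h : IsLastGraft G t1 t2) :
    peel (graft G t1 t2 u) = G := by
  have hne : t1 ≠ t2 := ne_of_apply_ne BT.nu h.nu_lt.ne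
  have hT : node u t1 t2 ∉ (G.erase t1).erase t2 := fun hT =>
    hG.node_notMem h.left_mem (Finset.mem_of_mem_erase (Finset.mem_of_mem_erase hT))
  have hmt : minTree (graft G t1 t2 u) = node u t1 t2 := by
    refine minTree_eq_of_forall_lt (mem_nonLeaves.2 ⟨Finset.mem_insert_self _ _, id⟩)
      fun s hs hsT => ?_
    obtain ⟨hs, hsleaf⟩ := mem_nonLeaves.1 hs
    rcases mem_graft.1 hs with rfl | ⟨hsG, hs1, -⟩
    · exact absurd rfl hsT
    · rw [nu_node h.nu_lt]
      exact h.nu_lt_of_mem_nonLeaves s (mem_nonLeaves.2 ⟨hsG, hsleaf⟩) hs1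
  rw [peel_eq hmt, graft, Finset.erase_insert hT,
    insert_insert_erase_erase h.left_mem h.right_mem hne]

theorem rkForest_peel_lt (hF : ForestValid n BT.pLyn F) (h : (nonLeaves F).Nonempty) :
    rkForest (peel F) < rkForest F := by
  obtain ⟨c, l, r, hmt⟩ := exists_minTree_eq_node h
  have hG := isLastGraft_peel hF hmt
  conv_rhs => rw [← graft_peel hF hmt]
  rw [rkForest_graft (forestValid_peel hF h) hG.left_mem hG.right_mem
    (ne_of_apply_ne BT.nu hG.nu_lt.ne)]
  omega

theorem forestWord_eq_peel (hF : ForestValid n BT.pLyn F) (hmt : minTree F = node c l r) :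
    forestWord F = forestWord (peel F) ++ [(l.nu, r.nu, c)] := by
  conv_lhs => rw [← graft_peel hF hmt]
  exact forestWord_graft (forestValid_peel hF ⟨_, minTree_mem_nonLeaves hmt⟩)
    (isLastGraft_peel hF hmt) c

end Peel

section MergeLabel

variable {A : Finset ℕ} {π π' : PPart A} {b1 b2 : Finset ℕ × ℕ} {p : ℕ}

theorem sdiff_eq_of_merge (hb1 : b1 ∈ π.1) (hb2 : b2 ∈ π.1) (hne : b1 ≠ b2)
    (hπ' : π'.1 = insert (b1.1 ∪ b2.1, p) ((π.1.erase b1).erase b2)) :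
    π.1 \ π'.1 = {b1, b2} ∧ π'.1 \ π.1 = {(b1.1 ∪ b2.1, p)} := by
  have hsub : ∀ b ∈ π.1, b.1 ⊆ b1.1 ∪ b2.1 → (b1.1 ∪ b2.1, p) ∈ π.1 →
      (b1.1 ∪ b2.1, p) = b := by
    intro b hb hbsub h
    by_contra h'
    exact Finset.disjoint_left.1 (π.2.2.1 _ h b hb h') (hbsub (π.2.1 b hb)) (π.2.1 b hb)
  have hnew : (b1.1 ∪ b2.1, p) ∉ π.1 := fun h =>
    hne ((hsub b1 hb1 Finset.subset_union_left h).symm.trans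
      (hsub b2 hb2 Finset.subset_union_right h))
  have h1 : b1 ≠ (b1.1 ∪ b2.1, p) := fun h => hnew (h ▸ hb1)
  have h2 : b2 ≠ (b1.1 ∪ b2.1, p) := fun h => hnew (h ▸ hb2)
  constructor <;> ext x <;>
    simp only [Finset.mem_sdiff, hπ', Finset.mem_insert, Finset.mem_erase, Finset.mem_singleton]
  · constructor
    · rintro ⟨hx, hx'⟩
      by_contra hc
      exact hx' (Or.inr ⟨fun h => hc (Or.inr h), fun h => hc (Or.inl h), hx⟩)
    · rintro (rfl | rfl) <;> simp_all
  · constructor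
    · rintro ⟨rfl | ⟨-, -, hx⟩, hx'⟩
      exacts [rfl, absurd hx hx']
    · rintro rfl
      exact ⟨Or.inl rfl, hnew⟩

theorem labPP_eq_of_merge (hb1 : b1 ∈ π.1) (hb2 : b2 ∈ π.1) (hlt : minB b1.1 < minB b2.1)
    (hπ' : π'.1 = insert (b1.1 ∪ b2.1, p) ((π.1.erase b1).erase b2)) :
    labPP π π' = (minB b1.1, minB b2.1, decide (p = b1.2)) := by
  have hne : b1 ≠ b2 := fun h => hlt.ne (h ▸ rfl)
  obtain ⟨hold, hnew⟩ := sdiff_eq_of_merge hb1 hb2 hne hπ'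
  have hmins : (({b1, b2} : Finset (Finset ℕ × ℕ)).image fun b => minB b.1) =
      {minB b1.1, minB b2.1} := by simp [Finset.image_insert]
  have hmin : WithTop.untopD 0 ({minB b1.1, minB b2.1} : Finset ℕ).min = minB b1.1 := by
    rw [Finset.min_insert, Finset.min_singleton, min_eq_left (WithTop.coe_le_coe.2 hlt.le)]
    rfl
  have hmax : WithBot.unbotD 0 ({minB b1.1, minB b2.1} : Finset ℕ).max = minB b2.1 := by
    rw [Finset.max_insert, Finset.max_singleton, max_eq_right (WithBot.coe_le_coe.2 hlt.le)]
    rfl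
  simp only [labPP, hold, hnew, hmins, hmin, hmax]
  simp [hlt.ne']

end MergeLabel

section Ascent

variable {n : ℕ} {P : BT → Prop} {G : Finset BT} {c u : Bool} {l r t t1 t2 : BT}

theorem not_ltLp_iff {a b x b' : ℕ} {c u : Bool} (hb : b ≠ b') :
    ¬ ltLp (a, b, c) (x, b', u) ↔
      x ≤ a ∧ (x = a → u ≤ c ∧ (c = u ∧ u = true → b' < b)) := by
  rw [← not_iff_not]
  cases c <;> cases u <;> simp [ltLp, eq_comm (a := x), hb.le_iff_lt]

theorem ForestValid.forall_nu_lt_iff (hG : ForestValid n P G) (hmt : minTree G = node c l r)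
    (ht : t ∈ G) : (∀ s ∈ nonLeaves G, s ≠ t → t.nu < s.nu) ↔ t.nu ≤ l.nu := by
  have hlr := hG.nu_lt_nu_of_node_mem (minTree_mem hmt)
  refine ⟨fun h => ?_, fun hle s hs hst => ?_⟩
  · by_cases htT : t = node c l r
    · rw [htT, nu_node hlr]
    · simpa [nu_node hlr] using (h _ (minTree_mem_nonLeaves hmt) (Ne.symm htT)).le
  · refine (hle.trans (hG.nu_le_of_minTree_eq hmt hs)).lt_of_ne fun h => hst ?_
    exact hG.eq_of_nu_eq (mem_nonLeaves.1 hs).1 ht h.symm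

theorem ForestValid.pLyn_node_iff (hG : ForestValid n BT.pLyn G) (hmt : minTree G = node c l r)
    (ht1 : t1 ∈ G) (ht2 : t2 ∈ G) (hle : t1.nu ≤ l.nu) :
    (node u t1 t2).pLyn ↔
      (t1.nu = l.nu → u ≤ c ∧ (c = u ∧ u = true → t2.nu < r.nu)) := by
  have hlr := hG.nu_lt_nu_of_node_mem (minTree_mem hmt)
  rcases hle.lt_or_eq with hlt | heq
  · cases t1 with
    | leaf a => simp [pLyn, (hG.1 t2 ht2).2, hlt.ne]
    | node =>
        exact absurd (hG.nu_le_of_minTree_eq hmt (mem_nonLeaves.2 ⟨ht1, id⟩)) (not_le.2 hlt)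
  · obtain rfl : t1 = node c l r :=
      hG.eq_of_nu_eq ht1 (minTree_mem hmt) (heq.trans (nu_node hlr).symm)
    simp only [heq, true_implies]
    exact ⟨fun h => h.2.2, fun h => ⟨(hG.1 _ ht1).2, (hG.1 t2 ht2).2, h⟩⟩

theorem not_ltLp_getLast_iff (hG : ForestValid n BT.pLyn G) (ht1 : t1 ∈ G) (ht2 : t2 ∈ G) :
    (∀ x ∈ (forestWord G).getLast?, ¬ ltLp x (t1.nu, t2.nu, u)) ↔
      (node u t1 t2).pLyn ∧ ∀ s ∈ nonLeaves G, s ≠ t1 → t1.nu < s.nu := by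
  rcases (nonLeaves G).eq_empty_or_nonempty with h | h
  · cases t1 with
    | leaf a => simp [forestWord_eq_nil h, h, BT.pLyn, (hG.1 t2 ht2).2]
    | node => exact absurd (h ▸ mem_nonLeaves.2 ⟨ht1, id⟩) (Finset.notMem_empty _)
  obtain ⟨c, l, r, hmt⟩ := exists_minTree_eq_node h
  have hT := minTree_mem hmt
  have hlr := hG.nu_lt_nu_of_node_mem hT
  have hrt : r.nu ≠ t2.nu := by
    by_cases h2 : t2 = node c l r
    · rw [h2, nu_node hlr]
      exact hlr.ne'
    · exact fun h => Finset.disjoint_left.1 (hG.2.1 _ hT t2 ht2 (Ne.symm h2))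
        (Finset.mem_union_right _ r.nu_mem_leaves) (h ▸ t2.nu_mem_leaves)
  rw [forestWord_eq_peel hG hmt, List.getLast?_concat, hG.forall_nu_lt_iff hmt ht1]
  simp only [Option.mem_def, Option.some_inj, forall_eq', not_ltLp_iff hrt]
  exact ⟨fun ⟨hle, hloc⟩ => ⟨(hG.pLyn_node_iff hmt ht1 ht2 hle).2 hloc, hle⟩,
    fun ⟨hpl, hle⟩ => ⟨hle, (hG.pLyn_node_iff hmt ht1 ht2 hle).1 hpl⟩⟩

end Ascent

namespace FLynP

variable {n : ℕ} {t1 t2 : BT} {u : Bool}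

def toPPart (F : FLynP n) : PPart (Finset.Icc 1 n) := ⟨blocks F.1, F.2.isPPart_blocks⟩

@[simp]
theorem val_toPPart (F : FLynP n) : F.toPPart.1 = blocks F.1 := rfl

theorem covPP_toPPart_of_graft (G : FLynP n) {π : PPart (Finset.Icc 1 n)} (ht1 : t1 ∈ G.1)
    (ht2 : t2 ∈ G.1) (hnu : t1.nu < t2.nu) (hπ : π.1 = blocks (graft G.1 t1 t2 u)) :
    covPP G.toPPart π ∧ labPP G.toPPart π = (t1.nu, t2.nu, u) := by
  have hb1 : (t1.leaves, t1.ppt) ∈ G.toPPart.1 := Finset.mem_image_of_mem _ ht1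
  have hb2 : (t2.leaves, t2.ppt) ∈ G.toPPart.1 := Finset.mem_image_of_mem _ ht2
  have hlt : minB t1.leaves < minB t2.leaves := by rwa [minB_leaves, minB_leaves]
  have hπ' := hπ.trans (blocks_graft G.2 ht1 ht2)
  refine ⟨⟨_, hb1, _, hb2, hlt, _, by cases u <;> simp [ppt], hπ'⟩, ?_⟩
  rw [labPP_eq_of_merge hb1 hb2 hlt hπ', minB_leaves, minB_leaves,
    decide_ppt_node_eq_left (G.2.ppt_ne ht1 ht2 (ne_of_apply_ne BT.nu hnu.ne))]

theorem exists_graft_of_covPP (G : FLynP n) {π : PPart (Finset.Icc 1 n)}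
    (h : covPP G.toPPart π) :
    ∃ t1 ∈ G.1, ∃ t2 ∈ G.1, t1.nu < t2.nu ∧ ∃ u, π.1 = blocks (graft G.1 t1 t2 u) := by
  obtain ⟨b1, hb1, b2, hb2, hlt, p, hp, hπ⟩ := h
  obtain ⟨t1, ht1, rfl⟩ := Finset.mem_image.1 hb1
  obtain ⟨t2, ht2, rfl⟩ := Finset.mem_image.1 hb2
  rw [minB_leaves, minB_leaves] at hlt
  have hppt := G.2.ppt_ne ht1 ht2 (ne_of_apply_ne BT.nu hlt.ne)
  refine ⟨t1, ht1, t2, ht2, hlt, decide (p = t1.ppt), ?_⟩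
  rw [hπ, blocks_graft G.2 ht1 ht2]
  rcases hp with rfl | rfl <;> simp [ppt, hppt.symm]

theorem peel_induction {motive : FLynP n → Prop}
    (bot : ∀ F : FLynP n, nonLeaves F.1 = ∅ → motive F)
    (step : ∀ (F : FLynP n) (h : (nonLeaves F.1).Nonempty),
      motive ⟨peel F.1, forestValid_peel F.2 h⟩ → motive F)
    (F : FLynP n) : motive F := by
  induction hk : rkForest F.1 using Nat.strong_induction_on generalizing F with
  | _ k ih =>
    rcases (nonLeaves F.1).eq_empty_or_nonempty with h | h
    · exact bot F h
    · exact step F h (ih _ (hk ▸ rkForest_peel_lt F.2 h) _ rfl)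

/-- The chain `c(F)`. -/
noncomputable def chainOf (F : FLynP n) : List (PPart (Finset.Icc 1 n)) :=
  if h : (nonLeaves F.1).Nonempty then
    chainOf ⟨peel F.1, forestValid_peel F.2 h⟩ ++ [F.toPPart]
  else [F.toPPart]
termination_by rkForest F.1
decreasing_by exact rkForest_peel_lt F.2 h

theorem chainOf_of_nonempty (F : FLynP n) (h : (nonLeaves F.1).Nonempty) :
    F.chainOf = chainOf ⟨peel F.1, forestValid_peel F.2 h⟩ ++ [F.toPPart] := by
  rw [chainOf, dif_pos h]

theorem chainOf_of_eq_empty (F : FLynP n) (h : nonLeaves F.1 = ∅) :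
    F.chainOf = [botPP (Finset.Icc 1 n)] := by
  have hbot : F.toPPart = botPP (Finset.Icc 1 n) :=
    Subtype.ext ((congrArg blocks (F.2.eq_botForest h)).trans (blocks_botForest n))
  rw [chainOf, dif_neg (by simp [h]), hbot]

theorem getLast?_chainOf (F : FLynP n) : F.chainOf.getLast? = some F.toPPart := by
  rw [chainOf]
  split_ifs <;> simp

theorem head?_chainOf (F : FLynP n) : F.chainOf.head? = some (botPP (Finset.Icc 1 n)) := by
  induction F using peel_induction with
  | bot F h => rw [chainOf_of_eq_empty F h]; rfl
  | step F h ih => rw [chainOf_of_nonempty F h, List.head?_append, ih]; rfl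

theorem covPP_toPPart_peel (F : FLynP n) (h : (nonLeaves F.1).Nonempty) {c : Bool} {l r : BT}
    (hmt : minTree F.1 = node c l r) :
    covPP (toPPart ⟨peel F.1, forestValid_peel F.2 h⟩) F.toPPart ∧
      labPP (toPPart ⟨peel F.1, forestValid_peel F.2 h⟩) F.toPPart = (l.nu, r.nu, c) := by
  have hG := isLastGraft_peel F.2 hmt
  exact covPP_toPPart_of_graft _ hG.left_mem hG.right_mem hG.nu_lt
    (by rw [val_toPPart, graft_peel F.2 hmt])

theorem isChain_chainOf (F : FLynP n) : F.chainOf.IsChain covPP := by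
  induction F using peel_induction with
  | bot F h => rw [chainOf_of_eq_empty F h]; exact List.isChain_singleton _
  | step F h ih =>
      obtain ⟨c, l, r, hmt⟩ := exists_minTree_eq_node h
      rw [chainOf_of_nonempty F h, isChain_concat_iff, getLast?_chainOf]
      refine ⟨ih, fun x hx => ?_⟩
      rw [Option.mem_some_iff] at hx
      exact hx ▸ (covPP_toPPart_peel F h hmt).1

theorem wordOf_chainOf (F : FLynP n) : wordOf labPP F.chainOf = forestWord F.1 := by
  induction F using peel_induction with
  | bot F h => rw [chainOf_of_eq_empty F h, forestWord_eq_nil h]; rfl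
  | step F h ih =>
      obtain ⟨c, l, r, hmt⟩ := exists_minTree_eq_node h
      rw [chainOf_of_nonempty F h, wordOf_concat _ _ (getLast?_chainOf _), ih,
        forestWord_eq_peel F.2 hmt, (covPP_toPPart_peel F h hmt).2]

theorem ascFree_forestWord (F : FLynP n) : AscFree ltLp (forestWord F.1) := by
  induction F using peel_induction with
  | bot F h => rw [forestWord_eq_nil h]; exact List.isChain_nil
  | step F h ih =>
      obtain ⟨c, l, r, hmt⟩ := exists_minTree_eq_node h
      have hG := isLastGraft_peel F.2 hmt
      have hpl := (F.2.1 _ (minTree_mem hmt)).2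
      rw [forestWord_eq_peel F.2 hmt]
      exact isChain_concat_iff.2 ⟨ih, (not_ltLp_getLast_iff (forestValid_peel F.2 h)
        hG.left_mem hG.right_mem).2 ⟨hpl, hG.nu_lt_of_mem_nonLeaves⟩⟩

theorem forestWord_eq_nil_iff (F : FLynP n) : forestWord F.1 = [] ↔ nonLeaves F.1 = ∅ := by
  refine ⟨fun hw => ?_, forestWord_eq_nil⟩
  by_contra h
  obtain ⟨c, l, r, hmt⟩ := exists_minTree_eq_node (Finset.nonempty_iff_ne_empty.2 h)
  simp [forestWord_eq_peel F.2 hmt] at hw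

theorem eq_of_forestWord_eq (F₁ F₂ : FLynP n) (h : forestWord F₁.1 = forestWord F₂.1) :
    F₁ = F₂ := by
  induction F₁ using peel_induction generalizing F₂ with
  | bot F₁ h₁ =>
      have h₂ := (forestWord_eq_nil_iff F₂).1 (h ▸ (forestWord_eq_nil_iff F₁).2 h₁)
      exact Subtype.ext ((F₁.2.eq_botForest h₁).trans (F₂.2.eq_botForest h₂).symm)
  | step F₁ h₁ ih =>
      have h₂ : (nonLeaves F₂.1).Nonempty := by
        rw [Finset.nonempty_iff_ne_empty, Ne, ← forestWord_eq_nil_iff, ← h,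
          forestWord_eq_nil_iff]
        exact h₁.ne_empty
      obtain ⟨c₁, l₁, r₁, hmt₁⟩ := exists_minTree_eq_node h₁
      obtain ⟨c₂, l₂, r₂, hmt₂⟩ := exists_minTree_eq_node h₂
      rw [forestWord_eq_peel F₁.2 hmt₁, forestWord_eq_peel F₂.2 hmt₂] at h
      obtain ⟨hpeel, hlast⟩ := List.append_inj' h rfl
      have hG : peel F₁.1 = peel F₂.1 :=
        congrArg Subtype.val (ih ⟨peel F₂.1, forestValid_peel F₂.2 h₂⟩ hpeel)
      simp only [List.cons.injEq, Prod.mk.injEq, and_true] at hlast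
      obtain ⟨hl, hr, rfl⟩ := hlast
      have hG₁ := isLastGraft_peel F₁.2 hmt₁
      have hG₂ := isLastGraft_peel F₂.2 hmt₂
      have hV := forestValid_peel F₁.2 h₁
      obtain rfl : l₁ = l₂ := hV.eq_of_nu_eq hG₁.left_mem (hG ▸ hG₂.left_mem) hl
      obtain rfl : r₁ = r₂ := hV.eq_of_nu_eq hG₁.right_mem (hG ▸ hG₂.right_mem) hr
      refine Subtype.ext ((graft_peel F₁.2 hmt₁).symm.trans ?_)
      rw [hG, graft_peel F₂.2 hmt₂]

theorem chainOf_eq_of_graft (G H : FLynP n) (hG : IsLastGraft G.1 t1 t2)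
    (hH : H.1 = graft G.1 t1 t2 u) : H.chainOf = G.chainOf ++ [H.toPPart] := by
  have h : (nonLeaves H.1).Nonempty := by
    rw [hH]
    exact ⟨_, mem_nonLeaves.2 ⟨Finset.mem_insert_self _ _, id⟩⟩
  rw [chainOf_of_nonempty H h]
  congr 2
  exact Subtype.ext ((congrArg peel hH).trans (peel_graft G.2 hG))

theorem exists_chainOf_eq (c : List (PPart (Finset.Icc 1 n)))
    (hhead : c.head? = some (botPP (Finset.Icc 1 n))) (hc : c.IsChain covPP)
    (hasc : AscFree ltLp (wordOf labPP c)) : ∃ F : FLynP n, F.chainOf = c := by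
  induction c using List.reverseRecOn with
  | nil => simp at hhead
  | append_singleton d y ih =>
    rcases eq_or_ne d [] with rfl | hd
    · rw [List.nil_append, List.head?_cons, Option.some_inj] at hhead
      exact ⟨botFP n, hhead ▸ chainOf_of_eq_empty _ (nonLeaves_botForest n)⟩
    obtain ⟨x, hx⟩ := Option.isSome_iff_exists.1 (List.getLast?_isSome.2 hd)
    rw [isChain_concat_iff] at hc
    rw [wordOf_concat _ _ hx] at hasc
    have hasc' := isChain_concat_iff.1 hasc
    obtain ⟨G, rfl⟩ := ih (by rwa [List.head?_append_of_ne_nil _ hd] at hhead) hc.1 hasc'.1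
    rw [getLast?_chainOf, Option.some_inj] at hx
    subst hx
    obtain ⟨t1, ht1, t2, ht2, hnu, u, hy⟩ :=
      exists_graft_of_covPP G (hc.2 _ (getLast?_chainOf G))
    have hjunction := hasc'.2
    rw [wordOf_chainOf, (covPP_toPPart_of_graft G ht1 ht2 hnu hy).2] at hjunction
    obtain ⟨hpl, hmin⟩ := (not_ltLp_getLast_iff G.2 ht1 ht2).1 hjunction
    refine ⟨⟨graft G.1 t1 t2 u, forestValid_graft G.2 ht1 ht2 hnu hpl⟩, ?_⟩
    rw [chainOf_eq_of_graft G _ ⟨ht1, ht2, hnu, hmin⟩ rfl]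
    congr 2
    exact Subtype.ext hy.symm

end FLynP

/-- The map `F ↦ c(F)` is a bijection between pointed Lyndon forests on
`[n]` and the ascent-free (w.r.t. `λ•` and `Λₙ•`) saturated chains of `Πₙ•` starting at
`0̂`; the chain `c(F)` is the unique chain from `0̂` whose word of labels is the word of
`F` read along the reverse-minimal linear extension of its internal vertices. -/
theorem pointed_Lyndon_forest_chain_bijection (n : ℕ) :
    ∃ e : FLynP n ≃
        {c : List (PPart (Finset.Icc 1 n)) //
          c.head? = some (botPP (Finset.Icc 1 n)) ∧ c.Chain' covPP ∧
          AscFree ltLp (wordOf labPP c)},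
      ∀ F : FLynP n, wordOf labPP (e F).1 = forestWord F.1 := by
  refine ⟨Equiv.ofBijective (fun F => ⟨F.chainOf, F.head?_chainOf, F.isChain_chainOf,
    F.wordOf_chainOf ▸ F.ascFree_forestWord⟩) ⟨fun F₁ F₂ h => ?_, fun c => ?_⟩,
    FLynP.wordOf_chainOf⟩
  · apply FLynP.eq_of_forestWord_eq
    rw [← FLynP.wordOf_chainOf, ← FLynP.wordOf_chainOf]
    exact congrArg (wordOf labPP ·.1) h
  · obtain ⟨F, hF⟩ := FLynP.exists_chainOf_eq c.1 c.2.1 c.2.2.1 c.2.2.2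
    exact ⟨F, Subtype.ext hF⟩
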